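/- Let f : ℝ³ → [0,∞) be measurable, not almost everywhere zero, with ∫_{ℝ³} |p| f(p) dp < ∞. Let L be an invertible real 3×3 matrix and D a nonzero diagonal real 3×3 matrix. Then the function s ↦ 16π ∫_{ℝ³} (pᵀ (Lᵀ exp(sD) L) p)^{1/2} f(p) dp is strictly convex on ℝ (here exp denotes the matrix exponential). -/

import Mathlib

open MeasureTheory Matrix Real Filter Topology Set Asymptotics

noncomputable section

/-- 3×3 real matrices; symmetric ones form `Sym3`, encoded via `Matrix.IsSymm`/`Matrix.PosDef`. -/
abbrev Mat3 := Matrix (Fin 3) (Fin 3) ℝ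

/-- vectors in ℝ³ -/
abbrev Vec3 := Fin 3 → ℝ

/-- Euclidean norm on ℝ³. -/
def enorm3 (p : Vec3) : ℝ := Real.sqrt (∑ i, p i ^ 2)

/-- the quadratic form pᵀBp. -/
def quadForm (B : Mat3) (p : Vec3) : ℝ := p ⬝ᵥ B.mulVec p

/-- Ψ(B)_{ij} = 4π (det B)^{1/2} ∫ (pᵀBp)^{−1/2} p_i p_j f(p) dp. -/
def PsiM (f : Vec3 → ℝ) (B : Mat3) : Mat3 :=
  Matrix.of fun i j =>
    (4 * π) * Real.sqrt B.det * ∫ p : Vec3, (Real.sqrt (quadForm B p))⁻¹ * (p i * p j * f p)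

/-- χ_b(k)_{ij} = 4π (det b)^{1/2} ∫ (pᵀbp)^{−3/2} ((bp)ᵀ k (bp)) p_i p_j f(p) dp. -/
def chiM (f : Vec3 → ℝ) (b : Mat3) (k : Mat3) : Mat3 :=
  Matrix.of fun i j =>
    (4 * π) * Real.sqrt b.det *
      ∫ p : Vec3, ((Real.sqrt (quadForm b p))⁻¹ ^ 3) * (quadForm k (b.mulVec p) * (p i * p j * f p))

/-- With u = ah, w = kh, α = hᵀah and b = a⁻¹:
M_a(k) = (2/det a)((hᵀkh) a + α k − 2(u wᵀ + w uᵀ) + tr(bk)(2 u uᵀ − α a)). -/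
def MM (a : Mat3) (h : Vec3) (k : Mat3) : Mat3 :=
  (2 / a.det) • ((h ⬝ᵥ k.mulVec h) • a + (h ⬝ᵥ a.mulVec h) • k
    - (2:ℝ) • (vecMulVec (a.mulVec h) (k.mulVec h) + vecMulVec (k.mulVec h) (a.mulVec h))
    + (a⁻¹ * k).trace • ((2:ℝ) • vecMulVec (a.mulVec h) (a.mulVec h) - (h ⬝ᵥ a.mulVec h) • a))

/-- The Fuchsian condition at B (with A = B⁻¹):
2Ψ(B) = A − (2/det A)((hᵀAh) A − 2 (Ah)(Ah)ᵀ). -/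
def FuchsCond (f : Vec3 → ℝ) (h : Vec3) (B : Mat3) : Prop :=
  (2:ℝ) • PsiM f B =
    B⁻¹ - (2 / (B⁻¹).det) •
      ((h ⬝ᵥ (B⁻¹).mulVec h) • B⁻¹ - (2:ℝ) • vecMulVec ((B⁻¹).mulVec h) ((B⁻¹).mulVec h))

/-- F(B) = 16π ∫ (pᵀBp)^{1/2} f dp + 2 (det B)^{−1/2} + 4 (det B)^{1/2} hᵀB⁻¹h. -/
def Ffun (f : Vec3 → ℝ) (h : Vec3) (B : Mat3) : ℝ :=
  16 * π * (∫ p : Vec3, Real.sqrt (quadForm B p) * f p)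
    + 2 * (Real.sqrt B.det)⁻¹ + 4 * Real.sqrt B.det * (h ⬝ᵥ (B⁻¹).mulVec h)

/-!
Diagonalising the geodesic, `pᵀ Lᵀ exp(sD) L p = ∑ᵢ qᵢ² exp(dᵢ s)` with `q = Lp`. For such an
exponential sum `G` the Cauchy–Schwarz inequality gives `G'² ≤ G G''`, hence
`(√G)'' = (2 G G'' - G'²) / (4 G^{3/2}) > 0` as soon as some `qᵢ dᵢ ≠ 0`. Since `L` is invertible,
for a fixed `j` with `dⱼ ≠ 0` this fails only on the hyperplane `(Lp)ⱼ = 0`, a null set, so the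
integrand is strictly convex in `s` for almost every `p`; integrating against the nonzero weight `f`
keeps strict convexity.
-/

lemma StrictConvexOn.const_mul {E : Type*} [AddCommGroup E] [Module ℝ E] {S : Set E}
    {g : E → ℝ} (hg : StrictConvexOn ℝ S g) {c : ℝ} (hc : 0 < c) :
    StrictConvexOn ℝ S fun x => c * g x := by
  refine ⟨hg.1, fun x hx y hy hxy a b ha hb hab => ?_⟩
  have := mul_lt_mul_of_pos_left (hg.2 hx hy hxy ha hb hab) hc
  simp only [smul_eq_mul] at this ⊢
  linarith

lemma strictConvexOn_integral_mul {α E : Type*} [MeasurableSpace α] {μ : Measure α}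
    [AddCommGroup E] [Module ℝ E] {S : Set E} (hS : Convex ℝ S) {g : α → E → ℝ} {w : α → ℝ}
    (hw : 0 ≤ᵐ[μ] w) (hw0 : ¬ w =ᵐ[μ] 0) (hg : ∀ᵐ p ∂μ, StrictConvexOn ℝ S (g p))
    (hint : ∀ x ∈ S, Integrable (fun p => g p x * w p) μ) :
    StrictConvexOn ℝ S fun x => ∫ p, g p x * w p ∂μ := by
  refine ⟨hS, fun x hx y hy hxy a b ha hb hab => ?_⟩
  set z := a • x + b • y
  have hz : z ∈ S := hS hx hy ha.le hb.le hab
  have hint_comb : Integrable (fun p => a * (g p x * w p) + b * (g p y * w p)) μ :=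
    ((hint x hx).const_mul a).add ((hint y hy).const_mul b)
  have hgap_pos : ∀ᵐ p ∂μ, 0 ≤ a * (g p x * w p) + b * (g p y * w p) - g p z * w p ∧
      (w p ≠ 0 → 0 < a * (g p x * w p) + b * (g p y * w p) - g p z * w p) := by
    filter_upwards [hw, hg] with p hwp hgp
    have hlt : 0 < a * g p x + b * g p y - g p z := by
      have := hgp.2 hx hy hxy ha hb hab
      simp only [smul_eq_mul] at this
      linarith
    have hfactor : a * (g p x * w p) + b * (g p y * w p) - g p z * w p =
        (a * g p x + b * g p y - g p z) * w p := by ring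
    rw [hfactor]
    exact ⟨mul_nonneg hlt.le hwp, fun hne => mul_pos hlt (hwp.lt_of_ne' hne)⟩
  have hsupp : 0 < μ (Function.support fun p =>
      a * (g p x * w p) + b * (g p y * w p) - g p z * w p) := by
    refine (pos_iff_ne_zero.2 fun h => hw0 (μ.measure_support_eq_zero_iff.1 h)).trans_le ?_
    refine measure_mono_ae ?_
    filter_upwards [hgap_pos] with p hp hwp
    exact (hp.2 hwp).ne'
  have hgap_integral :=
    (integral_pos_iff_support_of_nonneg_ae (hgap_pos.mono fun p hp => hp.1)
      (hint_comb.sub (hint z hz))).2 hsupp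
  rw [integral_sub hint_comb (hint z hz),
    integral_add ((hint x hx).const_mul a) ((hint y hy).const_mul b), integral_const_mul,
    integral_const_mul] at hgap_integral
  simp only [smul_eq_mul]
  linarith

lemma strictConvexOn_univ_sqrt_of_hasDerivAt {g g' g'' : ℝ → ℝ}
    (hg : ∀ s, HasDerivAt g (g' s) s) (hg' : ∀ s, HasDerivAt g' (g'' s) s)
    (hpos : ∀ s, 0 < g s) (h : ∀ s, g' s ^ 2 < 2 * g s * g'' s) :
    StrictConvexOn ℝ univ fun s => √(g s) := by
  have hd1 : ∀ s, HasDerivAt (fun s => √(g s)) (g' s / (2 * √(g s))) s :=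
    fun s => (hg s).sqrt (hpos s).ne'
  have hd2 : ∀ s, HasDerivAt (fun s => g' s / (2 * √(g s)))
      ((2 * g s * g'' s - g' s ^ 2) / (4 * g s * √(g s))) s := by
    intro s
    have hg_pos := hpos s
    have hsqrt : 0 < √(g s) := sqrt_pos.2 hg_pos
    refine ((hg' s).fun_div ((hd1 s).const_mul 2) (by positivity)).congr_deriv ?_
    field_simp
    rw [sq_sqrt (hpos s).le]
    ring
  refine strictConvexOn_univ_of_deriv2_pos
    (continuous_iff_continuousAt.2 fun s => (hd1 s).continuousAt) fun s => ?_
  have hderiv : deriv (fun s => √(g s)) = fun s => g' s / (2 * √(g s)) :=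
    funext fun s => (hd1 s).deriv
  rw [Function.iterate_succ_apply, Function.iterate_one, hderiv, (hd2 s).deriv]
  have hg_pos := hpos s
  have hsqrt : 0 < √(g s) := sqrt_pos.2 hg_pos
  exact div_pos (by linarith [h s]) (by positivity)

lemma mul_mul_self_nonneg {ι : Type*} {c : ι → ℝ} (d : ι → ℝ) (hc : 0 ≤ c) :
    0 ≤ c * d * d := fun i => by
  simpa only [Pi.mul_apply, Pi.zero_apply, mul_assoc] using
    mul_nonneg (hc i) (mul_self_nonneg (d i))

section ExpSum

variable {ι : Type*} [Fintype ι] (c d : ι → ℝ)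

def expSum (s : ℝ) : ℝ := ∑ i, c i * exp (d i * s)

lemma hasDerivAt_expSum (s : ℝ) : HasDerivAt (expSum c d) (expSum (c * d) d s) s := by
  have hterm (i : ι) : HasDerivAt (fun s => c i * exp (d i * s)) (c i * d i * exp (d i * s)) s :=
    (((hasDerivAt_id' s).const_mul (d i)).exp.const_mul (c i)).congr_deriv (by ring)
  simp only [expSum, Pi.mul_apply]
  exact HasDerivAt.fun_sum fun i _ => hterm i

variable {c}

lemma expSum_pos (hc : 0 ≤ c) {j : ι} (hj : 0 < c j) (s : ℝ) : 0 < expSum c d s :=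
  Finset.sum_pos' (fun i _ => mul_nonneg (hc i) (exp_pos _).le)
    ⟨j, Finset.mem_univ j, mul_pos hj (exp_pos _)⟩

lemma expSum_mul_sq_le (hc : 0 ≤ c) (s : ℝ) :
    expSum (c * d) d s ^ 2 ≤ expSum c d s * expSum (c * d * d) d s :=
  Finset.sum_sq_le_sum_mul_sum_of_sq_le_mul _ (fun i _ => mul_nonneg (hc i) (exp_pos _).le)
    (fun i _ => mul_nonneg (mul_mul_self_nonneg d hc i) (exp_pos _).le)
    fun i _ => le_of_eq (by simp only [Pi.mul_apply]; ring)

lemma strictConvexOn_univ_sqrt_expSum (hc : 0 ≤ c) {j : ι} (hcj : 0 < c j) (hdj : d j ≠ 0) :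
    StrictConvexOn ℝ univ fun s => √(expSum c d s) := by
  refine strictConvexOn_univ_sqrt_of_hasDerivAt (hasDerivAt_expSum c d)
    (hasDerivAt_expSum (c * d) d) (expSum_pos d hc hcj) fun s => ?_
  have hpos : 0 < expSum c d s * expSum (c * d * d) d s :=
    mul_pos (expSum_pos d hc hcj s)
      (expSum_pos d (mul_mul_self_nonneg d hc)
        (by simpa only [Pi.mul_apply, mul_assoc] using mul_pos hcj (mul_self_pos.2 hdj)) s)
  linarith [expSum_mul_sq_le d hc s]

end ExpSum

lemma Matrix.IsDiag.exists_apply_self_ne_zero {ι α : Type*} [DecidableEq ι] [Zero α]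
    {D : Matrix ι ι α} (hD : D.IsDiag) (hD0 : D ≠ 0) : ∃ i, D i i ≠ 0 := by
  by_contra! h
  refine hD0 (hD.diagonal_diag.symm.trans ?_)
  rw [show D.diag = 0 from funext h]
  exact diagonal_zero

lemma dotProduct_mulVec_transpose_mul_exp_mul {ι : Type*} [Fintype ι] [DecidableEq ι]
    (L D : Matrix ι ι ℝ) (hD : D.IsDiag) (s : ℝ) (p : ι → ℝ) :
    p ⬝ᵥ (Lᵀ * NormedSpace.exp (s • D) * L) *ᵥ p =
      expSum (fun i => (L *ᵥ p) i ^ 2) (fun i => D i i) s := by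
  have hexp : NormedSpace.exp (s • D) = diagonal fun i => exp (D i i * s) := by
    conv_lhs => rw [← hD.diagonal_diag]
    rw [← diagonal_smul, Matrix.exp_diagonal, Pi.exp_def]
    congr 1
    funext i
    rw [← Real.exp_eq_exp_ℝ, Pi.smul_apply, diag_apply, smul_eq_mul, mul_comm]
  rw [hexp, Matrix.mul_assoc, ← mulVec_mulVec, dotProduct_mulVec, vecMul_transpose,
    ← mulVec_mulVec]
  simp only [expSum, dotProduct, mulVec_diagonal]
  exact Finset.sum_congr rfl fun i _ => by ring

lemma abs_dotProduct_mulVec_le {ι : Type*} [Fintype ι] (B : Matrix ι ι ℝ) (p : ι → ℝ) :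
    |p ⬝ᵥ B *ᵥ p| ≤ (∑ i, ∑ j, |B i j|) * ∑ i, p i ^ 2 := by
  have hp (i j : ι) : |p i| * |p j| ≤ ∑ k, p k ^ 2 := by
    have hi := Finset.single_le_sum (fun k _ => sq_nonneg (p k)) (Finset.mem_univ i)
    have hj := Finset.single_le_sum (fun k _ => sq_nonneg (p k)) (Finset.mem_univ j)
    nlinarith [sq_abs (p i), sq_abs (p j), two_mul_le_add_sq |p i| |p j|]
  calc |p ⬝ᵥ B *ᵥ p| = |∑ i, ∑ j, p i * B i j * p j| := by
        simp only [dotProduct, mulVec, Finset.mul_sum, mul_assoc]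
    _ ≤ ∑ i, ∑ j, |p i * B i j * p j| :=
        (Finset.abs_sum_le_sum_abs _ _).trans
          (Finset.sum_le_sum fun i _ => Finset.abs_sum_le_sum_abs _ _)
    _ ≤ ∑ i, ∑ j, |B i j| * ∑ k, p k ^ 2 := by
        gcongr with i _ j _
        rw [abs_mul, abs_mul]
        nlinarith [hp i j, abs_nonneg (B i j)]
    _ = (∑ i, ∑ j, |B i j|) * ∑ i, p i ^ 2 := by simp only [Finset.sum_mul]

lemma sqrt_quadForm_le (B : Mat3) (p : Vec3) :
    √(quadForm B p) ≤ √(∑ i, ∑ j, |B i j|) * enorm3 p :=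
  calc √(quadForm B p) ≤ √((∑ i, ∑ j, |B i j|) * ∑ i, p i ^ 2) :=
        sqrt_le_sqrt ((le_abs_self _).trans (abs_dotProduct_mulVec_le B p))
    _ = √(∑ i, ∑ j, |B i j|) * enorm3 p := sqrt_mul (by positivity) _

lemma integrable_sqrt_quadForm_mul {f : Vec3 → ℝ} (hmeas : Measurable f)
    (hnonneg : ∀ p, 0 ≤ f p) (hint : Integrable fun p => enorm3 p * f p) (B : Mat3) :
    Integrable fun p => √(quadForm B p) * f p := by
  have hcont : Continuous (quadForm B) := by unfold quadForm; fun_prop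
  refine (hint.const_mul √(∑ i, ∑ j, |B i j|)).mono'
    ((continuous_sqrt.comp hcont).aestronglyMeasurable.mul hmeas.aestronglyMeasurable)
    (Eventually.of_forall fun p => ?_)
  rw [norm_mul, norm_of_nonneg (sqrt_nonneg _), norm_of_nonneg (hnonneg p), ← mul_assoc]
  exact mul_le_mul_of_nonneg_right (sqrt_quadForm_le B p) (hnonneg p)

lemma volume_setOf_mulVec_apply_eq_zero {ι : Type*} [Fintype ι] [DecidableEq ι]
    {L : Matrix ι ι ℝ} (hL : IsUnit L) (j : ι) :
    volume {p : ι → ℝ | (L *ᵥ p) j = 0} = 0 := by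
  let ℓ : (ι → ℝ) →ₗ[ℝ] ℝ := (LinearMap.proj j).comp L.mulVecLin
  have hℓ : LinearMap.ker ℓ ≠ ⊤ := by
    intro htop
    have h : L⁻¹ *ᵥ Pi.single j 1 ∈ LinearMap.ker ℓ := htop ▸ Submodule.mem_top
    change (L *ᵥ (L⁻¹ *ᵥ Pi.single j 1)) j = 0 at h
    rw [mulVec_mulVec, mul_nonsing_inv L ((isUnit_iff_isUnit_det L).1 hL), one_mulVec,
      Pi.single_eq_same] at h
    exact one_ne_zero h
  exact Measure.addHaar_submodule volume (LinearMap.ker ℓ) hℓ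

/-- strict geodesic convexity of the kinetic term of F:
s ↦ 16π ∫ (pᵀ(Lᵀ exp(sD) L)p)^{1/2} f dp is strictly convex on ℝ. -/
theorem kinetic_term_strictly_geodesically_convex (f : Vec3 → ℝ)
    (hmeas : Measurable f) (hnonneg : ∀ p, 0 ≤ f p) (hne : ¬ f =ᵐ[volume] 0)
    (hint : Integrable (fun p : Vec3 => enorm3 p * f p))
    (L D : Mat3) (hL : IsUnit L) (hD : D.IsDiag) (hD0 : D ≠ 0) :
    StrictConvexOn ℝ Set.univ
      (fun s : ℝ => 16 * π * ∫ p : Vec3,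
        Real.sqrt (quadForm (Lᵀ * NormedSpace.exp (s • D) * L) p) * f p) := by
  obtain ⟨j, hj⟩ := hD.exists_apply_self_ne_zero hD0
  refine StrictConvexOn.const_mul ?_ (by positivity)
  refine strictConvexOn_integral_mul convex_univ (Eventually.of_forall hnonneg) hne ?_
    fun s _ => integrable_sqrt_quadForm_mul hmeas hnonneg hint _
  filter_upwards [measure_eq_zero_iff_ae_notMem.1 (volume_setOf_mulVec_apply_eq_zero hL j)]
    with p hp
  have hq : 0 < (L *ᵥ p) j ^ 2 := sq_pos_iff.2 hp
  simpa only [quadForm, dotProduct_mulVec_transpose_mul_exp_mul L D hD] using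
    strictConvexOn_univ_sqrt_expSum (fun i => D i i) (fun i => sq_nonneg _) hq hj
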